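/- Let n ≥ 2, k ∈ ℤ with k ≥ 2, and let g : ℝⁿ → ℂ be of the form g(y₁,…,yₙ) = g₁(y₁)⋯gₙ(yₙ), where each g_j : ℝ → ℂ is smooth and nowhere vanishing. Suppose that G(η) = g(η₁)⋯g(η_k) is invariant under every orthogonal transformation R of ℝ^{nk} fixing α₁,…,αₙ, i.e. G(Rη) = G(η) for all η. Then the logarithmic second derivatives (g_j'/g_j)' are all equal to one common constant; consequently each g_j has the form g_j(t) = e^{a t² + b_j t + c_j} with the same a ∈ ℂ for all j, and g(y) = e^{a|y|² + b·y + c} is a Gaussian (with the same covariance a in every variable). -/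

import Mathlib

open MeasureTheory Complex Real

noncomputable section

/-- `R : ℝ^{nk} → ℝ^{nk}` (with `ℝ^{nk}` realized as `k`-tuples of vectors of `ℝⁿ`)
is an orthogonal transformation fixing the vectors `α_i = (e_i, …, e_i)`,
`i = 1, …, n`. -/
def FixingOrtho (n k : ℕ)
    (R : (Fin k → EuclideanSpace ℝ (Fin n)) → (Fin k → EuclideanSpace ℝ (Fin n))) : Prop :=
  (∀ a b, R (a + b) = R a + R b) ∧
  (∀ (c : ℝ) a, R (c • a) = c • R a) ∧
  Function.Bijective R ∧
  (∀ a b, (∑ i : Fin k, (inner ℝ (R a i) (R b i) : ℝ)) = ∑ i : Fin k, (inner ℝ (a i) (b i) : ℝ)) ∧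
  (∀ i : Fin n, R (fun _ => EuclideanSpace.single i (1 : ℝ)) = fun _ => EuclideanSpace.single i 1)

namespace GS3
variable {n k : ℕ}

abbrev V (n k : ℕ) := Fin k → EuclideanSpace ℝ (Fin n)

def Bfm (a b : V n k) : ℝ := ∑ i, (inner ℝ (a i) (b i) : ℝ)

lemma Bfm_comm (a b : V n k) : Bfm a b = Bfm b a := by
  unfold Bfm; exact Finset.sum_congr rfl fun i _ => real_inner_comm _ _

lemma Bfm_add_left (a b c : V n k) : Bfm (a + b) c = Bfm a c + Bfm b c := by
  simp [Bfm, inner_add_left, Finset.sum_add_distrib]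

lemma Bfm_add_right (a b c : V n k) : Bfm a (b + c) = Bfm a b + Bfm a c := by
  simp [Bfm, inner_add_right, Finset.sum_add_distrib]

lemma Bfm_smul_left (r : ℝ) (a c : V n k) : Bfm (r • a) c = r * Bfm a c := by
  simp [Bfm, real_inner_smul_left, Finset.mul_sum, mul_assoc]

lemma Bfm_smul_right (r : ℝ) (a c : V n k) : Bfm a (r • c) = r * Bfm a c := by
  simp [Bfm, real_inner_smul_right, Finset.mul_sum, mul_left_comm]

def rot (θ : ℝ) (u v : V n k) (η : V n k) : V n k :=
  η + (((Real.cos θ - 1) * Bfm η u - Real.sin θ * Bfm η v)/2) • u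
    + (((Real.cos θ - 1) * Bfm η v + Real.sin θ * Bfm η u)/2) • v

variable {u v : V n k}

lemma Bfm_rot_u (huu : Bfm u u = 2) (hvu : Bfm v u = 0) (θ : ℝ) (η : V n k) :
    Bfm (rot θ u v η) u = Real.cos θ * Bfm η u - Real.sin θ * Bfm η v := by
  simp only [rot, Bfm_add_left, Bfm_smul_left, huu, hvu]
  ring

lemma Bfm_rot_v (hvv : Bfm v v = 2) (huv : Bfm u v = 0) (θ : ℝ) (η : V n k) :
    Bfm (rot θ u v η) v = Real.cos θ * Bfm η v + Real.sin θ * Bfm η u := by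
  simp only [rot, Bfm_add_left, Bfm_smul_left, hvv, huv]
  ring

lemma rot_add (θ : ℝ) (a b : V n k) :
    rot θ u v (a + b) = rot θ u v a + rot θ u v b := by
  simp only [rot, Bfm_add_left]
  module

lemma rot_smul (θ : ℝ) (r : ℝ) (a : V n k) :
    rot θ u v (r • a) = r • rot θ u v a := by
  simp only [rot, Bfm_smul_left]
  module

lemma rot_zero (η : V n k) : rot 0 u v η = η := by
  simp [rot]

lemma rot_comp (huu : Bfm u u = 2) (hvv : Bfm v v = 2)
    (huv : Bfm u v = 0) (hvu : Bfm v u = 0) (θ' θ : ℝ) (η : V n k) :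
    rot θ' u v (rot θ u v η) = rot (θ + θ') u v η := by
  conv_lhs => rw [rot]
  rw [Bfm_rot_u huu hvu, Bfm_rot_v hvv huv]
  simp only [rot, Real.cos_add, Real.sin_add]
  module

lemma rot_inner (huu : Bfm u u = 2) (hvv : Bfm v v = 2)
    (huv : Bfm u v = 0) (hvu : Bfm v u = 0) (θ : ℝ) (a b : V n k) :
    Bfm (rot θ u v a) (rot θ u v b) = Bfm a b := by
  simp only [rot, Bfm_add_left, Bfm_add_right, Bfm_smul_left, Bfm_smul_right,
    huu, hvv, huv, hvu, Bfm_comm u a, Bfm_comm v a, Bfm_comm u b, Bfm_comm v b]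
  linear_combination ((Bfm a u * Bfm b u + Bfm a v * Bfm b v)/2) * Real.sin_sq_add_cos_sq θ

lemma rot_fix (θ : ℝ) (α : V n k) (h1 : Bfm α u = 0) (h2 : Bfm α v = 0) :
    rot θ u v α = α := by
  simp [rot, h1, h2]



def uu (i0 i1 : Fin k) (j : Fin n) : V n k :=
  fun m => if m = i0 then EuclideanSpace.single j 1
    else if m = i1 then -(EuclideanSpace.single j 1) else 0

lemma Bfm_uu_right (i0 i1 : Fin k) (h : i0 ≠ i1) (j : Fin n) (η : V n k) :
    Bfm η (uu i0 i1 j) = η i0 j - η i1 j := by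
  unfold Bfm uu
  have : ∀ m : Fin k, (inner ℝ (η m) (if m = i0 then EuclideanSpace.single j (1:ℝ)
      else if m = i1 then -(EuclideanSpace.single j 1) else 0) : ℝ)
      = (if m = i0 then η i0 j else 0) + (if m = i1 then -(η i1 j) else 0) := by
    intro m
    by_cases h0 : m = i0
    · subst h0
      simp [h, EuclideanSpace.inner_single_right]
    · by_cases h1 : m = i1
      · subst h1
        simp [h0, EuclideanSpace.inner_single_right, inner_neg_right]
      · simp [h0, h1]
  rw [Finset.sum_congr rfl (fun m _ => this m)]
  rw [Finset.sum_add_distrib]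
  simp [sub_eq_add_neg]
lemma uu_apply_self (i0 i1 : Fin k) (h : i0 ≠ i1) (j l : Fin n) :
    uu i0 i1 j i0 l = (if l = j then (1:ℝ) else 0) := by
  simp [uu, EuclideanSpace.single_apply]
lemma uu_apply_other (i0 i1 : Fin k) (h : i0 ≠ i1) (j l : Fin n) :
    uu i0 i1 j i1 l = -(if l = j then (1:ℝ) else 0) := by
  simp [uu, h.symm, EuclideanSpace.single_apply]
lemma uu_apply_rest (i0 i1 : Fin k) (m : Fin k) (hm0 : m ≠ i0) (hm1 : m ≠ i1) (j l : Fin n) :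
    uu i0 i1 j m l = 0 := by
  simp [uu, hm0, hm1]

lemma uu_uu (i0 i1 : Fin k) (hi : i0 ≠ i1) (j : Fin n) : Bfm (uu i0 i1 j : V n k) (uu i0 i1 j) = 2 := by
  rw [Bfm_uu_right i0 i1 hi, uu_apply_self i0 i1 hi, uu_apply_other i0 i1 hi]
  norm_num
lemma uu_uu' (i0 i1 : Fin k) (hi : i0 ≠ i1) (j j' : Fin n) (hj : j ≠ j') : Bfm (uu i0 i1 j : V n k) (uu i0 i1 j') = 0 := by
  rw [Bfm_uu_right i0 i1 hi, uu_apply_self i0 i1 hi, uu_apply_other i0 i1 hi]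
  simp [Ne.symm hj]
lemma alpha_uu (i0 i1 : Fin k) (hi : i0 ≠ i1) (j : Fin n) (i : Fin n) :
    Bfm (fun _ => EuclideanSpace.single i (1:ℝ) : V n k) (uu i0 i1 j) = 0 := by
  rw [Bfm_uu_right i0 i1 hi]
  simp


-- the chosen η and its coordinates
def et (i0 i1 : Fin k) (j j' : Fin n) (x1 y1 x2 y2 : ℝ) : V n k :=
  fun m => if m = i0 then (EuclideanSpace.single j x1 + EuclideanSpace.single j' y1)
    else if m = i1 then (EuclideanSpace.single j x2 + EuclideanSpace.single j' y2) else 0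

lemma et_apply (i0 i1 : Fin k) (j j' : Fin n) (hj : j ≠ j') (x1 y1 x2 y2 : ℝ) (m : Fin k) (l : Fin n) :
    et i0 i1 j j' x1 y1 x2 y2 m l =
      if m = i0 then (if l = j then x1 else if l = j' then y1 else 0)
      else if m = i1 then (if l = j then x2 else if l = j' then y2 else 0) else 0 := by
  unfold et
  by_cases h0 : m = i0 <;> by_cases h1 : m = i1 <;>
    by_cases hlj : l = j <;> by_cases hlj' : l = j' <;>
      simp_all [EuclideanSpace.single_apply, PiLp.add_apply]

lemma rot_et_apply (i0 i1 : Fin k) (hi : i0 ≠ i1) (j j' : Fin n) (hj : j ≠ j')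
    (x1 y1 x2 y2 θ : ℝ) (m : Fin k) (l : Fin n) :
    rot θ (uu i0 i1 j) (uu i0 i1 j') (et i0 i1 j j' x1 y1 x2 y2) m l =
      (if m = i0 then (if l = j then x1 + ((Real.cos θ - 1) * (x1 - x2) - Real.sin θ * (y1 - y2))/2
          else if l = j' then y1 + ((Real.cos θ - 1) * (y1 - y2) + Real.sin θ * (x1 - x2))/2 else 0)
      else if m = i1 then (if l = j then x2 - ((Real.cos θ - 1) * (x1 - x2) - Real.sin θ * (y1 - y2))/2
          else if l = j' then y2 - ((Real.cos θ - 1) * (y1 - y2) + Real.sin θ * (x1 - x2))/2 else 0)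
      else 0) := by
  have hBu : Bfm (et i0 i1 j j' x1 y1 x2 y2) (uu i0 i1 j) = x1 - x2 := by
    rw [Bfm_uu_right i0 i1 hi]
    rw [et_apply i0 i1 j j' hj, et_apply i0 i1 j j' hj]
    simp [hi.symm]
  have hBv : Bfm (et i0 i1 j j' x1 y1 x2 y2) (uu i0 i1 j') = y1 - y2 := by
    rw [Bfm_uu_right i0 i1 hi]
    rw [et_apply i0 i1 j j' hj, et_apply i0 i1 j j' hj]
    simp [hi.symm, hj.symm]
  have hcoord : rot θ (uu i0 i1 j) (uu i0 i1 j') (et i0 i1 j j' x1 y1 x2 y2) m l =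
      et i0 i1 j j' x1 y1 x2 y2 m l
      + (((Real.cos θ - 1) * (x1 - x2) - Real.sin θ * (y1 - y2))/2) * uu i0 i1 j m l
      + (((Real.cos θ - 1) * (y1 - y2) + Real.sin θ * (x1 - x2))/2) * uu i0 i1 j' m l := by
    rw [rot, hBu, hBv]
    simp [PiLp.add_apply, PiLp.smul_apply]
  rw [hcoord, et_apply i0 i1 j j' hj]
  by_cases h0 : m = i0
  · rw [h0, uu_apply_self i0 i1 hi, uu_apply_self i0 i1 hi]
    simp only [if_pos rfl, if_neg hi]
    by_cases hlj : l = j <;> by_cases hlj' : l = j' <;> simp_all <;> ring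
  · by_cases h1 : m = i1
    · rw [h1, uu_apply_other i0 i1 hi, uu_apply_other i0 i1 hi]
      simp only [if_pos rfl, if_neg hi.symm]
      by_cases hlj : l = j <;> by_cases hlj' : l = j' <;> simp_all <;> ring
    · rw [uu_apply_rest i0 i1 m h0 h1, uu_apply_rest i0 i1 m h0 h1]
      simp [h0, h1]


lemma fixingOrtho_rot (i0 i1 : Fin k) (hi : i0 ≠ i1) (j j' : Fin n) (hj : j ≠ j') (θ : ℝ) :
    FixingOrtho n k (rot θ (uu i0 i1 j) (uu i0 i1 j')) := by
  have huu := uu_uu i0 i1 hi j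
  have hvv := uu_uu i0 i1 hi j'
  have huv := uu_uu' i0 i1 hi j j' hj
  have hvu := uu_uu' i0 i1 hi j' j (Ne.symm hj)
  refine ⟨rot_add θ, rot_smul θ, ?_, fun a b => rot_inner huu hvv huv hvu θ a b,
    fun i => rot_fix θ _ (alpha_uu i0 i1 hi j i) (alpha_uu i0 i1 hi j' i)⟩
  apply Function.bijective_iff_has_inverse.mpr
  refine ⟨rot (-θ) (uu i0 i1 j) (uu i0 i1 j'), fun η => ?_, fun η => ?_⟩
  · rw [rot_comp huu hvv huv hvu]; simp [rot_zero]
  · rw [rot_comp huu hvv huv hvu]; simp [rot_zero]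

lemma row_eval (gj : Fin n → ℝ → ℂ) (j j' : Fin n) (hj : j ≠ j') (X Y : ℝ) (S : Fin n → ℝ)
    (hS : ∀ l, S l = if l = j then X else if l = j' then Y else 0) :
    ∏ l, gj l (S l) =
      gj j X * gj j' Y * ∏ l ∈ (Finset.univ.erase j).erase j', gj l 0 := by
  rw [← Finset.mul_prod_erase Finset.univ _ (Finset.mem_univ j),
    ← Finset.mul_prod_erase _ _ (Finset.mem_erase.mpr ⟨Ne.symm hj, Finset.mem_univ j'⟩)]
  rw [hS j, hS j']
  simp only [if_pos rfl, if_neg hj]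
  rw [mul_assoc]
  congr 1
  congr 1
  · simp [Ne.symm hj]
  · apply Finset.prod_congr rfl
    intro l hl
    simp only [Finset.mem_erase] at hl
    rw [hS l, if_neg hl.2.1, if_neg hl.1]

lemma prod_eval (gj : Fin n → ℝ → ℂ) (i0 i1 : Fin k) (hi : i0 ≠ i1) (j j' : Fin n) (hj : j ≠ j')
    (f : Fin k → Fin n → ℝ) (X1 Y1 X2 Y2 : ℝ)
    (hf : ∀ m l, f m l = if m = i0 then (if l = j then X1 else if l = j' then Y1 else 0)
        else if m = i1 then (if l = j then X2 else if l = j' then Y2 else 0) else 0) :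
    ∏ m : Fin k, ∏ l : Fin n, gj l (f m l) =
      (gj j X1 * gj j' Y1 * (gj j X2 * gj j' Y2)) *
        ((∏ l ∈ (Finset.univ.erase j).erase j', gj l 0)^2 *
          ∏ m ∈ (Finset.univ.erase i0).erase i1, ∏ l : Fin n, gj l 0) := by
  rw [← Finset.mul_prod_erase Finset.univ _ (Finset.mem_univ i0),
    ← Finset.mul_prod_erase _ _ (Finset.mem_erase.mpr ⟨Ne.symm hi, Finset.mem_univ i1⟩)]
  have h0 : ∏ l, gj l (f i0 l) = gj j X1 * gj j' Y1 * ∏ l ∈ (Finset.univ.erase j).erase j', gj l 0 := by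
    apply row_eval gj j j' hj
    intro l; rw [hf i0 l, if_pos rfl]
  have h1 : ∏ l, gj l (f i1 l) = gj j X2 * gj j' Y2 * ∏ l ∈ (Finset.univ.erase j).erase j', gj l 0 := by
    apply row_eval gj j j' hj
    intro l; rw [hf i1 l, if_neg (Ne.symm hi), if_pos rfl]
  have h2 : ∏ m ∈ (Finset.univ.erase i0).erase i1, ∏ l, gj l (f m l)
      = ∏ m ∈ (Finset.univ.erase i0).erase i1, ∏ l : Fin n, gj l 0 := by
    apply Finset.prod_congr rfl
    intro m hm
    simp only [Finset.mem_erase] at hm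
    apply Finset.prod_congr rfl
    intro l _
    rw [hf m l, if_neg hm.2.1, if_neg hm.1]
  rw [h0, h1, h2]
  ring


-- difference-quotient identity from the constant family
lemma key_id (g h : ℝ → ℂ) (hg : ContDiff ℝ (⊤ : ℕ∞) g) (hh : ContDiff ℝ (⊤ : ℕ∞) h)
    (hgne : ∀ t, g t ≠ 0) (hhne : ∀ t, h t ≠ 0) (x1 x2 y1 y2 : ℝ)
    (hconst : ∀ θ : ℝ,
      g (x1 + ((Real.cos θ - 1) * (x1 - x2) - Real.sin θ * (y1 - y2))/2) *
        h (y1 + ((Real.cos θ - 1) * (y1 - y2) + Real.sin θ * (x1 - x2))/2) *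
      (g (x2 - ((Real.cos θ - 1) * (x1 - x2) - Real.sin θ * (y1 - y2))/2) *
        h (y2 - ((Real.cos θ - 1) * (y1 - y2) + Real.sin θ * (x1 - x2))/2)) =
      g x1 * h y1 * (g x2 * h y2)) :
    ((y1 : ℂ) - y2) * (deriv g x1 / g x1 - deriv g x2 / g x2) =
      ((x1 : ℂ) - x2) * (deriv h y1 / h y1 - deriv h y2 / h y2) := by
  set p : ℝ := x1 - x2 with hp
  set q : ℝ := y1 - y2 with hq
  set A : ℝ → ℝ := fun θ => ((Real.cos θ - 1) * p - Real.sin θ * q)/2 with hA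
  set B : ℝ → ℝ := fun θ => ((Real.cos θ - 1) * q + Real.sin θ * p)/2 with hB
  have hA0 : A 0 = 0 := by simp [hA]
  have hB0 : B 0 = 0 := by simp [hB]
  have hdA : HasDerivAt A (-q/2) 0 := by
    have : HasDerivAt (fun θ => ((Real.cos θ - 1) * p - Real.sin θ * q)/2)
        (((-Real.sin 0) * p - Real.cos 0 * q)/2) 0 :=
      ((((Real.hasDerivAt_cos 0).sub_const 1).mul_const p).sub
        ((Real.hasDerivAt_sin 0).mul_const q)).div_const 2
    simpa using this
  have hdB : HasDerivAt B (p/2) 0 := by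
    have : HasDerivAt (fun θ => ((Real.cos θ - 1) * q + Real.sin θ * p)/2)
        (((-Real.sin 0) * q + Real.cos 0 * p)/2) 0 :=
      ((((Real.hasDerivAt_cos 0).sub_const 1).mul_const q).add
        ((Real.hasDerivAt_sin 0).mul_const p)).div_const 2
    simpa using this
  -- the four composed functions
  have hf1 : HasDerivAt (fun θ => x1 + A θ) (-q/2) 0 := hdA.const_add x1
  have hf2 : HasDerivAt (fun θ => y1 + B θ) (p/2) 0 := hdB.const_add y1
  have hf3 : HasDerivAt (fun θ => x2 - A θ) (-(-q/2)) 0 := hdA.const_sub x2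
  have hf4 : HasDerivAt (fun θ => y2 - B θ) (-(p/2)) 0 := hdB.const_sub y2
  have hgd : ∀ t : ℝ, HasDerivAt g (deriv g t) t := fun t =>
    ((hg.differentiable (by simp)) t).hasDerivAt
  have hhd : ∀ t : ℝ, HasDerivAt h (deriv h t) t := fun t =>
    ((hh.differentiable (by simp)) t).hasDerivAt
  have hg1 : HasDerivAt (fun θ => g (x1 + A θ)) ((-q/2) • deriv g x1) 0 := by
    have := (hgd (x1 + A 0)).scomp 0 hf1
    rw [hA0, add_zero] at this; exact this
  have hg2 : HasDerivAt (fun θ => h (y1 + B θ)) ((p/2) • deriv h y1) 0 := by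
    have := (hhd (y1 + B 0)).scomp 0 hf2
    rw [hB0, add_zero] at this; exact this
  have hg3 : HasDerivAt (fun θ => g (x2 - A θ)) ((-(-q/2)) • deriv g x2) 0 := by
    have := (hgd (x2 - A 0)).scomp 0 hf3
    rw [hA0, sub_zero] at this; exact this
  have hg4 : HasDerivAt (fun θ => h (y2 - B θ)) ((-(p/2)) • deriv h y2) 0 := by
    have := (hhd (y2 - B 0)).scomp 0 hf4
    rw [hB0, sub_zero] at this; exact this
  have hP : HasDerivAt (fun θ => g (x1 + A θ) * h (y1 + B θ) * (g (x2 - A θ) * h (y2 - B θ)))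
      ((((-q/2) • deriv g x1) * h (y1 + B 0) + g (x1 + A 0) * ((p/2) • deriv h y1)) *
          (g (x2 - A 0) * h (y2 - B 0)) +
        g (x1 + A 0) * h (y1 + B 0) *
          ((((-(-q/2)) • deriv g x2) * h (y2 - B 0) + g (x2 - A 0) * ((-(p/2)) • deriv h y2))))
      0 := (hg1.mul hg2).mul (hg3.mul hg4)
  have hPc : (fun θ => g (x1 + A θ) * h (y1 + B θ) * (g (x2 - A θ) * h (y2 - B θ)))
      = fun _ : ℝ => g x1 * h y1 * (g x2 * h y2) := funext fun θ => hconst θ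
  have hzero : HasDerivAt (fun θ => g (x1 + A θ) * h (y1 + B θ) * (g (x2 - A θ) * h (y2 - B θ)))
      0 0 := by
    rw [hPc]; exact hasDerivAt_const 0 _
  have hD := hP.unique hzero
  simp only [hA0, hB0, add_zero, sub_zero, Complex.real_smul] at hD
  push_cast at hD
  have e1 := hgne x1; have e2 := hgne x2; have e3 := hhne y1; have e4 := hhne y2
  field_simp
  rw [hp, hq] at hD
  push_cast at hD
  ring_nf
  ring_nf at hD
  linear_combination (-2 : ℂ) * hD

end GS3

/-- **Step 3 of the proof of Theorem 1.** Let `g(y) = g₁(y₁)⋯gₙ(yₙ)` with each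
`g_j : ℝ → ℂ` smooth and nowhere vanishing, and suppose `G(η) = g(η₁)⋯g(η_k)` is
invariant under every orthogonal transformation of `ℝ^{nk}` fixing `α₁, …, αₙ`.
Then the logarithmic second derivatives `(g_j'/g_j)'` all equal one common
constant, and consequently `g_j(t) = e^{a t² + b_j t + c_j}` with the same
covariance `a` for all `j`; hence `g(y) = e^{a|y|² + b·y + c}` is a Gaussian. -/
theorem gaussian_of_smooth_product_invariance (n k : ℕ) (hn : 2 ≤ n) (hk : 2 ≤ k)
    (gj : Fin n → ℝ → ℂ)
    (hsmooth : ∀ j : Fin n, ContDiff ℝ (⊤ : ℕ∞) (gj j))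
    (hne : ∀ (j : Fin n) (t : ℝ), gj j t ≠ 0)
    (hsym : ∀ R, FixingOrtho n k R →
      ∀ η : Fin k → EuclideanSpace ℝ (Fin n),
        (∏ i : Fin k, ∏ j : Fin n, gj j (R η i j)) =
          ∏ i : Fin k, ∏ j : Fin n, gj j (η i j)) :
    ∃ a : ℂ,
      (∀ (j : Fin n) (t : ℝ), deriv (fun s : ℝ => deriv (gj j) s / gj j s) t = 2 * a) ∧
      ∃ b c : Fin n → ℂ, ∀ (j : Fin n) (t : ℝ),
        gj j t = Complex.exp (a * (t : ℂ) ^ 2 + b j * (t : ℂ) + c j) := by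
  classical
  set h : Fin n → ℝ → ℂ := fun j t => deriv (gj j) t / gj j t with hh
  -- the key difference-quotient identity
  have key : ∀ (j j' : Fin n), j ≠ j' → ∀ x1 x2 y1 y2 : ℝ,
      ((y1 : ℂ) - y2) * (h j x1 - h j x2) = ((x1 : ℂ) - x2) * (h j' y1 - h j' y2) := by
    intro j j' hj x1 x2 y1 y2
    set i0 : Fin k := ⟨0, by omega⟩ with hi0
    set i1 : Fin k := ⟨1, by omega⟩ with hi1
    have hi : i0 ≠ i1 := by simp [hi0, hi1, Fin.ext_iff]
    apply GS3.key_id (gj j) (gj j') (hsmooth j) (hsmooth j') (hne j) (hne j') x1 x2 y1 y2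
    intro θ
    have hS := hsym (GS3.rot θ (GS3.uu i0 i1 j) (GS3.uu i0 i1 j'))
      (GS3.fixingOrtho_rot i0 i1 hi j j' hj θ) (GS3.et i0 i1 j j' x1 y1 x2 y2)
    have hL := GS3.prod_eval gj i0 i1 hi j j' hj
      (fun m l => GS3.rot θ (GS3.uu i0 i1 j) (GS3.uu i0 i1 j') (GS3.et i0 i1 j j' x1 y1 x2 y2) m l)
      (x1 + ((Real.cos θ - 1) * (x1 - x2) - Real.sin θ * (y1 - y2))/2)
      (y1 + ((Real.cos θ - 1) * (y1 - y2) + Real.sin θ * (x1 - x2))/2)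
      (x2 - ((Real.cos θ - 1) * (x1 - x2) - Real.sin θ * (y1 - y2))/2)
      (y2 - ((Real.cos θ - 1) * (y1 - y2) + Real.sin θ * (x1 - x2))/2)
      (fun m l => GS3.rot_et_apply i0 i1 hi j j' hj x1 y1 x2 y2 θ m l)
    have hR := GS3.prod_eval gj i0 i1 hi j j' hj
      (fun m l => GS3.et i0 i1 j j' x1 y1 x2 y2 m l) x1 y1 x2 y2
      (fun m l => GS3.et_apply i0 i1 j j' hj x1 y1 x2 y2 m l)
    rw [hL, hR] at hS
    have hC : ((∏ l ∈ (Finset.univ.erase j).erase j', gj l 0)^2 *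
        ∏ m ∈ (Finset.univ.erase i0).erase i1, ∏ l : Fin n, gj l 0) ≠ 0 := by
      apply mul_ne_zero
      · exact pow_ne_zero _ (Finset.prod_ne_zero_iff.mpr fun l _ => hne l 0)
      · exact Finset.prod_ne_zero_iff.mpr fun m _ =>
          Finset.prod_ne_zero_iff.mpr fun l _ => hne l 0
    exact mul_right_cancel₀ hC hS
  -- indices
  set j0 : Fin n := ⟨0, by omega⟩ with hj0
  set j1 : Fin n := ⟨1, by omega⟩ with hj1
  have hj01 : j0 ≠ j1 := by simp [hj0, hj1, Fin.ext_iff]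
  set a : ℂ := (h j1 1 - h j1 0) / 2 with ha
  have ha2 : h j1 1 - h j1 0 = 2 * a := by rw [ha]; ring
  have hslope : ∀ (j : Fin n) (x1 x2 : ℝ), h j x1 - h j x2 = ((x1 : ℂ) - x2) * (2 * a) := by
    have hj0slope : h j0 1 - h j0 0 = 2 * a := by
      have := key j0 j1 hj01 1 0 1 0
      rw [ha2] at this
      simpa using this
    intro j x1 x2
    by_cases hj : j = j1
    · rw [hj]
      have := key j1 j0 (Ne.symm hj01) x1 x2 1 0
      rw [hj0slope] at this
      simpa using this
    · have := key j j1 hj x1 x2 1 0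
      rw [ha2] at this
      simpa using this
  have haff : ∀ (j : Fin n) (t : ℝ), h j t = 2 * a * t + h j 0 := by
    intro j t
    have := hslope j t 0
    push_cast at this
    linear_combination this
  refine ⟨a, ?_, fun j => h j 0, fun j => Complex.log (gj j 0), ?_⟩
  · intro j t
    have hfun : (fun s : ℝ => deriv (gj j) s / gj j s) = fun s : ℝ => 2 * a * (s : ℂ) + h j 0 :=
      funext fun s => haff j s
    rw [hfun]
    have hd : HasDerivAt (fun s : ℝ => 2 * a * (s : ℂ) + h j 0) (2 * a) t := by
      have hid : HasDerivAt (fun s : ℝ => (s : ℂ)) 1 t := by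
        simpa using (hasDerivAt_id t).ofReal_comp
      simpa using (hid.const_mul (2 * a)).add_const (h j 0)
    exact hd.deriv
  · intro j t
    set bj : ℂ := h j 0 with hbj
    set cj : ℂ := Complex.log (gj j 0) with hcj
    set F : ℝ → ℂ := fun s => gj j s * Complex.exp (-(a * (s : ℂ) ^ 2 + bj * s + cj)) with hF
    have hdF : ∀ s : ℝ, HasDerivAt F 0 s := by
      intro s
      have hid : HasDerivAt (fun s : ℝ => (s : ℂ)) 1 s := by
        simpa using (hasDerivAt_id s).ofReal_comp
      have hE : HasDerivAt (fun s : ℝ => -(a * (s : ℂ) ^ 2 + bj * s + cj))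
          (-(2 * a * s + bj)) s := by
        have h1 : HasDerivAt (fun s : ℝ => a * (s : ℂ) ^ 2) (a * (2 * s)) s := by
          have h1' := (hid.const_mul a).mul hid
          have heq : (fun s : ℝ => a * (s : ℂ) ^ 2) = fun s : ℝ => (a * (s : ℂ)) * (s : ℂ) := by
            funext x; ring
          rw [heq]
          exact h1'.congr_deriv (by ring)
        have h2 : HasDerivAt (fun s : ℝ => bj * (s : ℂ)) bj s := by
          simpa using hid.const_mul bj
        have := ((h1.add h2).add_const cj).neg
        exact this.congr_deriv (by ring)
      have hexp := hE.cexp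
      have hg : HasDerivAt (gj j) (deriv (gj j) s) s :=
        ((hsmooth j).differentiable (by simp) s).hasDerivAt
      have := hg.mul hexp
      have hval : deriv (gj j) s * Complex.exp (-(a * (s : ℂ) ^ 2 + bj * s + cj)) +
          gj j s * (Complex.exp (-(a * (s : ℂ) ^ 2 + bj * s + cj)) * -(2 * a * s + bj)) = 0 := by
        have hder : deriv (gj j) s = (2 * a * s + bj) * gj j s := by
          have h1 : deriv (gj j) s = h j s * gj j s := by
            rw [hh]
            exact (div_mul_cancel₀ _ (hne j s)).symm
          rw [h1, haff j s]
        rw [hder]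
        ring
      rw [hval] at this
      exact this
    have hconst : ∀ t : ℝ, F t = F 0 := by
      intro t
      exact is_const_of_deriv_eq_zero (fun s => (hdF s).differentiableAt)
        (fun s => (hdF s).deriv) t 0
    have hF0 : F 0 = 1 := by
      rw [hF]
      simp only [Complex.ofReal_zero]
      rw [show (-(a * (0:ℂ) ^ 2 + bj * 0 + cj)) = -cj by ring]
      rw [hcj, Complex.exp_neg, Complex.exp_log (hne j 0)]
      field_simp [hne j 0]
    have hFt := (hconst t).trans hF0
    rw [hF] at hFt
    simp only at hFt
    rw [Complex.exp_neg] at hFt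
    have hexpne : Complex.exp (a * (t : ℂ) ^ 2 + bj * t + cj) ≠ 0 := Complex.exp_ne_zero _
    field_simp at hFt
    rw [hFt]; show _ = Complex.exp (a * (t : ℂ) ^ 2 + bj * t + cj); congr 1; ring

end
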